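/- arXiv:2307.09497 — 6 statements merged into one kernel-verified Lean document; each statement's English description precedes it below -/
import Mathlib

section
/- Let C be a small category and let D be a class of morphisms of C that is stable under pullback, in the sense that for every p : E ⟶ B in D and every f : C' ⟶ B in C, a pullback of p along f exists in C and lies in D. Then there exist presheaves El and Tp on C and a morphism π : El ⟶ Tp in the presheaf category such that: (1) for every p : E ⟶ B in D there exist morphisms χ : yB ⟶ Tp and χ̄ : yE ⟶ El making a commuting square with yp and π that is a pullback square; and (2) for every object Γ of C and every morphism A : yΓ ⟶ Tp, the pullback of π along A is representable, and indeed is isomorphic over yΓ to yq for some morphism q : E' ⟶ Γ belonging to D. -/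
open CategoryTheory CategoryTheory.Limits

universe u

section Helpers

/-- A commutative square of functors to `Type u` that is a pointwise pullback (expressed
elementwise) is a pullback square. -/
theorem isPullback_of_pointwise {K : Type*} [Category K] {P X Y Z : K ⥤ Type u}
    {fst : P ⟶ X} {snd : P ⟶ Y} {f : X ⟶ Z} {g : Y ⟶ Z}
    (w : fst ≫ f = snd ≫ g)
    (inj : ∀ (k : K) (p q : P.obj k),
      fst.app k p = fst.app k q → snd.app k p = snd.app k q → p = q)
    (surj : ∀ (k : K) (x : X.obj k) (y : Y.obj k), f.app k x = g.app k y →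
      ∃ p : P.obj k, fst.app k p = x ∧ snd.app k p = y) :
    IsPullback fst snd f g := by
  classical
  choose l hl1 hl2 using surj
  have key : ∀ (s : PullbackCone f g) (k : K) (x : s.pt.obj k),
      f.app k (s.fst.app k x) = g.app k (s.snd.app k x) := by
    intro s k x
    exact types_congr_hom (NatTrans.congr_app s.condition k) x
  refine IsPullback.of_isLimit (PullbackCone.IsLimit.mk w
    (fun s => { app := fun k => TypeCat.ofHom fun x => l k (s.fst.app k x) (s.snd.app k x) (key s k x)
                naturality := ?_ }) ?_ ?_ ?_)
  · intro k k' u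
    refine ConcreteCategory.hom_ext _ _ fun x => ?_
    simp only [ConcreteCategory.comp_apply, TypeCat.ofHom_apply]
    apply inj k'
    · rw [hl1, NatTrans.naturality_apply fst u, hl1,
        ← NatTrans.naturality_apply s.fst u]
    · rw [hl2, NatTrans.naturality_apply snd u, hl2,
        ← NatTrans.naturality_apply s.snd u]
  · intro s
    ext k x
    exact hl1 _ _ _ _
  · intro s
    ext k x
    exact hl2 _ _ _ _
  · intro s m hm1 hm2
    refine NatTrans.ext (funext fun k => ConcreteCategory.hom_ext _ _ fun x => ?_)
    dsimp only [TypeCat.ofHom_apply]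
    apply inj k
    · rw [hl1]
      exact types_congr_hom (NatTrans.congr_app hm1 k) x
    · rw [hl2]
      exact types_congr_hom (NatTrans.congr_app hm2 k) x

variable {C : Type u} [SmallCategory C]

/-- Index type: the morphisms in `D`, as triples. -/
def LUIdx (D : MorphismProperty C) : Type u :=
  Σ (E B : C), {p : E ⟶ B // D p}

/-- The universe of types `Tp`. -/
@[simps]
def LUTp (D : MorphismProperty C) : Cᵒᵖ ⥤ Type u where
  obj Γ := Σ i : LUIdx D, (Γ.unop ⟶ i.2.1)
  map f := TypeCat.ofHom fun x => ⟨x.1, f.unop ≫ x.2⟩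
  map_id _ := by refine ConcreteCategory.hom_ext _ _ fun x => ?_; simp
  map_comp _ _ := by refine ConcreteCategory.hom_ext _ _ fun x => ?_; simp

/-- The universe of elements `El`. -/
@[simps]
def LUEl (D : MorphismProperty C) : Cᵒᵖ ⥤ Type u where
  obj Γ := Σ i : LUIdx D, (Γ.unop ⟶ i.1)
  map f := TypeCat.ofHom fun x => ⟨x.1, f.unop ≫ x.2⟩
  map_id _ := by refine ConcreteCategory.hom_ext _ _ fun x => ?_; simp
  map_comp _ _ := by refine ConcreteCategory.hom_ext _ _ fun x => ?_; simp

/-- The universal family `π : El ⟶ Tp`. -/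
@[simps]
def LUpi (D : MorphismProperty C) : LUEl D ⟶ LUTp D where
  app Γ := TypeCat.ofHom fun x => ⟨x.1, x.2 ≫ x.1.2.2.1⟩
  naturality _ _ _ := by refine ConcreteCategory.hom_ext _ _ fun x => ?_; exact Sigma.ext rfl (heq_of_eq (Category.assoc _ _ _))

end Helpers

/-- the local-universes construction of Lumsdaine–Warren and Awodey.
Let `C` be a small category, `D` a class of morphisms of `C` stable under pullback
(for every `p : E ⟶ B` in `D` and every `f : C' ⟶ B`, a pullback of `p` along `f`
exists in `C` and lies in `D`).  Then there are presheaves `El`, `Tp` on `C` and a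
morphism `π : El ⟶ Tp` such that
(1) every `p ∈ D` fits into a pullback square over `π` via characteristic maps
    `χ : yB ⟶ Tp`, `χ̄ : yE ⟶ El`; and
(2) for every `Γ` and `A : yΓ ⟶ Tp`, the pullback of `π` along `A` is representable
    by a morphism `q : E' ⟶ Γ` belonging to `D`. -/
theorem local_universes_exist {C : Type u} [SmallCategory C]
    (D : MorphismProperty C)
    (hD : ∀ ⦃E B C' : C⦄ (p : E ⟶ B) (f : C' ⟶ B), D p →
      ∃ (P : C) (fst : P ⟶ E) (snd : P ⟶ C'), IsPullback fst snd p f ∧ D snd) :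
    ∃ (El Tp : Cᵒᵖ ⥤ Type u) (π : El ⟶ Tp),
      (∀ ⦃E B : C⦄ (p : E ⟶ B), D p →
        ∃ (χ : yoneda.obj B ⟶ Tp) (χbar : yoneda.obj E ⟶ El),
          IsPullback χbar (yoneda.map p) π χ) ∧
      (∀ (Γ : C) (A : yoneda.obj Γ ⟶ Tp),
        ∃ (E' : C) (q : E' ⟶ Γ) (χbar : yoneda.obj E' ⟶ El),
          D q ∧ IsPullback χbar (yoneda.map q) π A) := by
  refine ⟨LUEl D, LUTp D, LUpi D, ?_, ?_⟩
  · -- Part (1)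
    intro E B p hp
    set i : LUIdx D := ⟨E, B, p, hp⟩ with hi
    refine ⟨{ app := fun Γ => TypeCat.ofHom fun f => ⟨i, f⟩,
              naturality := fun _ _ _ => rfl },
            { app := fun Γ => TypeCat.ofHom fun e => ⟨i, e⟩,
              naturality := fun _ _ _ => rfl }, ?_⟩
    apply isPullback_of_pointwise
    · ext Γ e
      rfl
    · intro Γ a b h1 _
      exact eq_of_heq (Sigma.mk.inj_iff.mp h1).2
    · rintro Γ ⟨j, e⟩ h hfg
      obtain ⟨rfl, h2⟩ := Sigma.mk.inj_iff.mp hfg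
      exact ⟨e, rfl, eq_of_heq h2⟩
  · -- Part (2)
    intro Γ A
    obtain ⟨i, f, hif⟩ : ∃ i fA, A.app (Opposite.op Γ) (𝟙 Γ) = (⟨i, fA⟩ : (LUTp D).obj (Opposite.op Γ)) :=
      ⟨_, _, rfl⟩
    have hA : ∀ (Δ : Cᵒᵖ) (h : Δ.unop ⟶ Γ), A.app Δ h = ⟨i, h ≫ f⟩ := by
      intro Δ h
      have := types_congr_hom (A.naturality h.op) (𝟙 Γ)
      simp only [yoneda_obj_map, Quiver.Hom.unop_op, Category.comp_id,
        types_comp_apply, TypeCat.ofHom_apply] at this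
      rw [hif] at this
      exact this
    obtain ⟨P, pfst, psnd, hpb, hDsnd⟩ := hD i.2.2.1 f i.2.2.2
    refine ⟨P, psnd,
      { app := fun Δ => TypeCat.ofHom fun g => ⟨i, g ≫ pfst⟩,
        naturality := fun _ _ u => by ext g; dsimp [LUEl]; rw [Category.assoc] },
      hDsnd, ?_⟩
    apply isPullback_of_pointwise
    · ext Δ g
      show (⟨i, (g ≫ pfst) ≫ i.2.2.1⟩ : (LUTp D).obj Δ) = A.app Δ (g ≫ psnd)
      rw [hA]
      rw [Category.assoc, Category.assoc, hpb.w]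
    · intro Δ a b h1 h2
      have h1' : a ≫ pfst = b ≫ pfst := eq_of_heq (Sigma.mk.inj_iff.mp h1).2
      have h2' : a ≫ psnd = b ≫ psnd := by simp only [yoneda_map_app] at h2; exact h2
      exact hpb.hom_ext h1' h2'
    · rintro Δ ⟨j, e⟩ h hfg
      rw [hA] at hfg
      obtain ⟨rfl, h2⟩ := Sigma.mk.inj_iff.mp hfg
      have h2' : e ≫ j.2.2.1 = h ≫ f := eq_of_heq h2
      refine ⟨hpb.lift e h h2', ?_, hpb.lift_snd e h h2'⟩
      show (⟨j, hpb.lift e h h2' ≫ pfst⟩ : (LUEl D).obj Δ) = ⟨j, e⟩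
      rw [hpb.lift_fst]
end

section
/- Let C be a small category and U a subterminal presheaf on C. The full subcategory of Psh(C) spanned by the U-modal presheaves is reflective: the inclusion functor has a left adjoint whose value on a presheaf X is the exponential X^U, with reflection unit the canonical map X ⟶ X^U. -/
open CategoryTheory CategoryTheory.Limits MonoidalCategory

universe u

variable {C : Type u} [SmallCategory C]

/-- The canonical map `X ⟶ X^U`, the currying of the (first) projection
`X × U ⟶ X`. -/
noncomputable def modalUnit (U X : Cᵒᵖ ⥤ Type u) : X ⟶ (ihom U).obj X :=
  MonoidalClosed.curry (CartesianMonoidalCategory.snd U X)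

/-- A presheaf `X` is `U`-modal when the canonical map `X ⟶ X^U` is an
isomorphism. -/
def IsModal (U X : Cᵒᵖ ⥤ Type u) : Prop := IsIso (modalUnit U X)

open MonoidalClosed CartesianMonoidalCategory

/-- Naturality of the modal unit. -/
lemma modalUnit_naturality (U : Cᵒᵖ ⥤ Type u) {X Y : Cᵒᵖ ⥤ Type u} (f : X ⟶ Y) :
    modalUnit U X ≫ (ihom U).map f = f ≫ modalUnit U Y := by
  unfold modalUnit
  rw [← curry_natural_right, ← curry_natural_left, whiskerLeft_snd]

lemma subterminal_whiskerLeft_snd {U : Cᵒᵖ ⥤ Type u} (hU : IsSubterminal U)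
    (W : Cᵒᵖ ⥤ Type u) : U ◁ snd U W = snd U (U ⊗ W) := by
  apply CartesianMonoidalCategory.hom_ext
  · rw [whiskerLeft_fst]
    exact hU _ _
  · rw [whiskerLeft_snd]

set_option maxHeartbeats 2000000 in
/-- When `U` is subterminal, the exponential `X^U` is `U`-modal. -/
lemma isModal_exp {U : Cᵒᵖ ⥤ Type u} (hU : IsSubterminal U) (X : Cᵒᵖ ⥤ Type u) :
    IsModal U ((ihom U).obj X) := by
  set Z := (ihom U).obj X with hZ
  set i : (ihom U).obj Z ⟶ Z :=
    curry (lift (fst U ((ihom U).obj Z)) ((ihom.ev U).app Z) ≫ (ihom.ev U).app X) with hi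
  refine ⟨i, ?_, ?_⟩
  · -- modalUnit ≫ i = 𝟙
    rw [hi, ← curry_natural_left]
    have h1 : U ◁ modalUnit U Z ≫ lift (fst U ((ihom U).obj Z)) ((ihom.ev U).app Z)
        = 𝟙 (U ⊗ Z) := by
      apply CartesianMonoidalCategory.hom_ext
      · simp only [Functor.id_obj]
        rw [Category.assoc, lift_fst, whiskerLeft_fst, Category.id_comp]
      · simp only [Functor.id_obj]
        rw [Category.assoc, lift_snd, ← uncurry_eq, Category.id_comp]
        show uncurry (curry (snd U Z)) = _
        rw [uncurry_curry]
    rw [← Category.assoc, h1, Category.id_comp, ← uncurry_id_eq_ev, curry_uncurry]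
  · -- i ≫ modalUnit = 𝟙
    show i ≫ curry (snd U Z) = 𝟙 ((ihom U).obj Z)
    rw [← curry_natural_left, whiskerLeft_snd]
    have h2 : snd U ((ihom U).obj Z) ≫ i = (ihom.ev U).app Z := by
      apply uncurry_injective
      rw [uncurry_natural_left, hi, uncurry_curry, uncurry_eq,
        subterminal_whiskerLeft_snd hU, ← Category.assoc]
      congr 1
      apply CartesianMonoidalCategory.hom_ext
      · simp only [Functor.id_obj]
        rw [Category.assoc, lift_fst, whiskerLeft_fst]
        exact hU _ _
      · simp only [Functor.id_obj]
        rw [Category.assoc, lift_snd, whiskerLeft_snd]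
    rw [h2, ← uncurry_id_eq_ev, curry_uncurry]

set_option maxHeartbeats 2000000 in
/-- When `U` is subterminal, the image of the unit under `exp U` is the unit at the
exponential. -/
lemma exp_map_modalUnit {U : Cᵒᵖ ⥤ Type u} (hU : IsSubterminal U) (X : Cᵒᵖ ⥤ Type u) :
    (ihom U).map (modalUnit U X) = modalUnit U ((ihom U).obj X) := by
  apply uncurry_injective
  rw [uncurry_eq]
  have := (ihom.ev U).naturality (modalUnit U X)
  simp only [Functor.comp_map, curriedTensor_obj_map, Functor.id_map] at this
  rw [this]
  show (ihom.ev U).app X ≫ modalUnit U X = uncurry (modalUnit U ((ihom U).obj X))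
  have : uncurry (modalUnit U ((ihom U).obj X)) = snd U ((ihom U).obj X) := by
    show uncurry (curry _) = _; rw [uncurry_curry]
  rw [this]
  apply uncurry_injective
  rw [uncurry_natural_left]
  have h3 : uncurry (modalUnit U X) = snd U X := by
    show uncurry (curry _) = _; rw [uncurry_curry]
  rw [h3, whiskerLeft_snd, uncurry_eq, subterminal_whiskerLeft_snd hU]
  simp only [Functor.comp_obj, curriedTensor_obj_obj, Functor.id_obj]

set_option maxHeartbeats 2000000 in
/-- Let `C` be a small category and `U` a subterminal presheaf on `C`.
The full subcategory of `Psh(C)` spanned by the `U`-modal presheaves is reflective: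
the reflection of `X` is the exponential `X^U`, with unit the canonical map
`X ⟶ X^U`.  Concretely, `X^U` is `U`-modal, and every map from `X` to a `U`-modal
presheaf factors uniquely through the canonical map `X ⟶ X^U`. -/
theorem modal_reflective (U : Cᵒᵖ ⥤ Type u) (hU : IsSubterminal U) :
    ∀ X : Cᵒᵖ ⥤ Type u,
      IsModal U ((ihom U).obj X) ∧
      ∀ (Y : Cᵒᵖ ⥤ Type u), IsModal U Y →
        ∀ f : X ⟶ Y, ∃! g : (ihom U).obj X ⟶ Y, modalUnit U X ≫ g = f := by
  intro X
  refine ⟨isModal_exp hU X, fun Y hY f => ?_⟩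
  haveI : IsIso (modalUnit U Y) := hY
  refine ⟨(ihom U).map f ≫ inv (modalUnit U Y), ?_, ?_⟩
  · show modalUnit U X ≫ ((ihom U).map f ≫ inv (modalUnit U Y)) = f
    rw [← Category.assoc, modalUnit_naturality, Category.assoc, IsIso.hom_inv_id,
      Category.comp_id]
  · intro g hg
    have hnat : g ≫ modalUnit U Y = modalUnit U ((ihom U).obj X) ≫ (ihom U).map g :=
      (modalUnit_naturality U g).symm
    have h4 : modalUnit U ((ihom U).obj X) ≫ (ihom U).map g = (ihom U).map f := by
      rw [← exp_map_modalUnit hU, ← Functor.map_comp, hg]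
    rw [IsIso.eq_comp_inv, hnat, h4]
end

section
/- Let C be a small category and U a subterminal presheaf on C. The full subcategory of Psh(C) spanned by the U-connected presheaves is reflective: the inclusion functor has a left adjoint whose value on a presheaf X is the pushout of the span X ⟵ X × U ⟶ U formed by the two product projections. -/
open CategoryTheory CategoryTheory.Limits MonoidalCategory

universe u

variable {C : Type u} [SmallCategory C]

/-- A presheaf `X` is `U`-connected when the projection `X × U ⟶ U` is an
isomorphism. -/
def IsConnectedAlong (U X : Cᵒᵖ ⥤ Type u) : Prop :=
  IsIso (CartesianMonoidalCategory.snd X U)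

/-- The `U`-connected reflection of `X`: the pushout of the span
`X ⟵ X × U ⟶ U` formed by the two product projections. -/
noncomputable def connReflection (U X : Cᵒᵖ ⥤ Type u) : Cᵒᵖ ⥤ Type u :=
  pushout (CartesianMonoidalCategory.fst X U) (CartesianMonoidalCategory.snd X U)

/-- The unit `X ⟶ Cl(X)` of the `U`-connected reflection: the coprojection
into the pushout. -/
noncomputable def connUnit (U X : Cᵒᵖ ⥤ Type u) : X ⟶ connReflection U X :=
  pushout.inl (CartesianMonoidalCategory.fst X U) (CartesianMonoidalCategory.snd X U)

namespace CategoryTheory.CartesianMonoidalCategory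

variable {𝒞 : Type*} [Category 𝒞] [CartesianMonoidalCategory 𝒞]

theorem isIso_snd_iff {Y U : 𝒞} : IsIso (snd Y U) ↔ ∃ a : U ⟶ Y, fst Y U = snd Y U ≫ a := by
  constructor
  · intro _
    exact ⟨inv (snd Y U) ≫ fst Y U, by simp⟩
  · rintro ⟨a, h⟩
    exact ⟨⟨lift a (𝟙 U), by ext <;> simp [h], by simp⟩⟩

theorem hom_ext_of_isIso_snd {Y U : 𝒞} [IsIso (snd Y U)] (a b : U ⟶ Y) : a = b := by
  have h : lift a (𝟙 U) = lift b (𝟙 U) := by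
    rw [← cancel_mono (snd Y U)]
    simp
  simpa using h =≫ fst Y U

theorem fst_comp_eq_snd_comp {X Y U : 𝒞} (a : U ⟶ Y) (h : fst Y U = snd Y U ≫ a) (f : X ⟶ Y) :
    fst X U ≫ f = snd X U ≫ a := by
  rw [← whiskerRight_fst, h, whiskerRight_snd_assoc]

/-- Since `- × U` preserves the pushout, it suffices to check the equation on `X × U`, where
it is the pushout condition, and on `U × U`, where it holds because `U` is subterminal. -/
theorem fst_eq_snd_comp_of_isPushout {X U P : 𝒞} (hU : IsSubterminal U) {i : X ⟶ P} {j : U ⟶ P}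
    (hP : IsPushout (fst X U) (snd X U) i j)
    [PreservesColimit (span (fst X U) (snd X U)) (tensorRight U)] :
    fst P U = snd P U ≫ j := by
  apply (hP.map (tensorRight U)).hom_ext <;>
    simp only [Functor.flip_obj_obj, curriedTensor_obj_obj, Functor.flip_obj_map,
      curriedTensor_map_app, whiskerRight_fst, whiskerRight_snd_assoc]
  · exact hP.w
  · exact hU (fst U U) (snd U U) =≫ j

end CategoryTheory.CartesianMonoidalCategory

open CartesianMonoidalCategory in
/-- Let `C` be a small category and `U` a subterminal presheaf on `C`.
The full subcategory of `Psh(C)` spanned by the `U`-connected presheaves is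
reflective: the reflection of `X` is the pushout of the span `X ⟵ X × U ⟶ U` of the
two product projections, with unit the coprojection `X ⟶ Cl(X)`.  Concretely, `Cl(X)`
is `U`-connected, and every map from `X` to a `U`-connected presheaf factors uniquely
through the coprojection `X ⟶ Cl(X)`. -/
theorem connected_reflective (U : Cᵒᵖ ⥤ Type u) (hU : IsSubterminal U) :
    ∀ X : Cᵒᵖ ⥤ Type u,
      IsConnectedAlong U (connReflection U X) ∧
      ∀ (Y : Cᵒᵖ ⥤ Type u), IsConnectedAlong U Y →
        ∀ f : X ⟶ Y, ∃! g : connReflection U X ⟶ Y, connUnit U X ≫ g = f := by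
  intro X
  refine ⟨isIso_snd_iff.2
    ⟨_, fst_eq_snd_comp_of_isPushout hU (IsPushout.of_hasPushout _ _)⟩, fun Y hY f => ?_⟩
  have : IsIso (snd Y U) := hY
  obtain ⟨a, ha⟩ := isIso_snd_iff.1 hY
  refine ⟨pushout.desc f a (fst_comp_eq_snd_comp a ha f), pushout.inl_desc _ _ _, fun g hg => ?_⟩
  apply pushout.hom_ext
  · rw [pushout.inl_desc]
    exact hg
  · exact hom_ext_of_isIso_snd _ _
end

section
/- Let F : B ⥤ A be a functor between categories and let Gl(F) be the Artin gluing of F, with projection functor j* : Gl(F) ⥤ B sending (a, b, f) to b. Then: (1) j* has a fully faithful right adjoint j_* given on objects by b ↦ (F b, b, 𝟙_{F b}); and (2) if A has an initial object ⊥, then j* also has a fully faithful left adjoint j_! given on objects by b ↦ (⊥, b, ! : ⊥ ⟶ F b). -/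
open CategoryTheory CategoryTheory.Limits

variable {A : Type*} [Category A] {B : Type*} [Category B]

/-- The direct image functor `j_* : B ⥤ Gl(F)` into the Artin gluing
`Gl(F) = Comma (𝟭 A) F`, given on objects by `b ↦ (F b, b, 𝟙_{F b})`. -/
def glueJStar (F : B ⥤ A) : B ⥤ Comma (𝟭 A) F where
  obj b := ⟨F.obj b, b, 𝟙 (F.obj b)⟩
  map {b b'} h := ⟨F.map h, h, by simp⟩

/-- The extension-by-initial functor `j_! : B ⥤ Gl(F)` into the Artin gluing
`Gl(F) = Comma (𝟭 A) F`, given on objects by `b ↦ (⊥, b, ! : ⊥ ⟶ F b)`. -/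
noncomputable def glueJShriek (F : B ⥤ A) [HasInitial A] : B ⥤ Comma (𝟭 A) F where
  obj b := ⟨⊥_ A, b, initial.to (F.obj b)⟩
  map {b b'} h := ⟨𝟙 (⊥_ A), h, by apply initial.hom_ext⟩


def glueAdjStar (F : B ⥤ A) : Comma.snd (𝟭 A) F ⊣ glueJStar F :=
  Adjunction.mkOfHomEquiv
    { homEquiv := fun x b =>
        { toFun := fun h => ⟨x.hom ≫ F.map h, h, by simp [glueJStar]⟩
          invFun := fun g => g.right
          left_inv := fun h => rfl
          right_inv := fun g => by
            apply CommaMorphism.ext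
            · simpa [glueJStar] using g.w.symm
            · rfl }
      homEquiv_naturality_left_symm := fun f g => rfl
      homEquiv_naturality_right := fun f g => by
        apply CommaMorphism.ext
        · show _ ≫ F.map (f ≫ g) = (_ ≫ F.map f) ≫ F.map g
          simp
        · rfl }

instance glueJStar_full (F : B ⥤ A) : (glueJStar F).Full where
  map_surjective g := ⟨g.right, by
    apply CommaMorphism.ext
    · have := g.w; simp [glueJStar] at this ⊢; simp [this]
    · rfl⟩

instance glueJStar_faithful (F : B ⥤ A) : (glueJStar F).Faithful where
  map_injective {b b'} h h' e := congrArg CommaMorphism.right e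

noncomputable def glueAdjShriek (F : B ⥤ A) [HasInitial A] :
    glueJShriek F ⊣ Comma.snd (𝟭 A) F :=
  Adjunction.mkOfHomEquiv
    { homEquiv := fun b x =>
        { toFun := fun g => g.right
          invFun := fun h => ⟨initial.to _, h, by apply initial.hom_ext⟩
          left_inv := fun g => by
            apply CommaMorphism.ext
            · apply initial.hom_ext
            · rfl
          right_inv := fun h => rfl }
      homEquiv_naturality_left_symm := fun f g => by
        apply CommaMorphism.ext
        · apply initial.hom_ext
        · rfl
      homEquiv_naturality_right := fun f g => rfl }

instance glueJShriek_full (F : B ⥤ A) [HasInitial A] : (glueJShriek F).Full where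
  map_surjective g := ⟨g.right, by
    apply CommaMorphism.ext
    · apply initial.hom_ext
    · rfl⟩

instance glueJShriek_faithful (F : B ⥤ A) [HasInitial A] : (glueJShriek F).Faithful where
  map_injective {b b'} h h' e := congrArg CommaMorphism.right e

/-- Let `F : B ⥤ A` and let `Gl(F) = Comma (𝟭 A) F` be the Artin
gluing of `F`, with projection `j* : Gl(F) ⥤ B` sending `(a, b, f)` to `b`.  Then
(1) `j*` has a fully faithful right adjoint `j_*` given by `b ↦ (F b, b, 𝟙)`, and
(2) if `A` has an initial object, `j*` has a fully faithful left adjoint `j_!` given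
by `b ↦ (⊥, b, !)`. -/
theorem glue_open_immersion (F : B ⥤ A) :
    (Nonempty (Comma.snd (𝟭 A) F ⊣ glueJStar F) ∧
      (glueJStar F).Full ∧ (glueJStar F).Faithful) ∧
    (∀ [HasInitial A],
      Nonempty (glueJShriek F ⊣ Comma.snd (𝟭 A) F) ∧
      (glueJShriek F).Full ∧ (glueJShriek F).Faithful) := by
  refine ⟨⟨⟨glueAdjStar F⟩, inferInstance, inferInstance⟩, ?_⟩
  intro _
  exact ⟨⟨glueAdjShriek F⟩, inferInstance, inferInstance⟩
end

section
/- Let F : B ⥤ A be a functor between categories that has a left adjoint L : A ⥤ B with adjunction unit η, and let Gl(F) be the Artin gluing of F, with projection functor i* : Gl(F) ⥤ A sending (a, b, f) to a. Then i* has a fully faithful left adjoint i_! given on objects by a ↦ (a, L a, η_a : a ⟶ F(L a)). -/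
open CategoryTheory CategoryTheory.Limits

variable {A : Type*} [Category A] {B : Type*} [Category B]

/-- Given an adjunction `L ⊣ F` with unit `η`, the functor `i_! : A ⥤ Gl(F)` into the
Artin gluing `Gl(F) = Comma (𝟭 A) F`, given on objects by
`a ↦ (a, L a, η_a : a ⟶ F (L a))`. -/
def glueIShriek {F : B ⥤ A} {L : A ⥤ B} (adj : L ⊣ F) : A ⥤ Comma (𝟭 A) F where
  obj a := ⟨a, L.obj a, adj.unit.app a⟩
  map {a a'} g := ⟨g, L.map g, by simp⟩

/-- Let `F : B ⥤ A` have a left adjoint `L : A ⥤ B` with unit `η`,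
and let `Gl(F) = Comma (𝟭 A) F` be the Artin gluing of `F`, with projection
`i* : Gl(F) ⥤ A` sending `(a, b, f)` to `a`.  Then `i*` has a fully faithful left
adjoint `i_!` given on objects by `a ↦ (a, L a, η_a)`. -/
theorem glue_closed_immersion_shriek {F : B ⥤ A} {L : A ⥤ B} (adj : L ⊣ F) :
    Nonempty (glueIShriek adj ⊣ Comma.fst (𝟭 A) F) ∧
      (glueIShriek adj).Full ∧ (glueIShriek adj).Faithful := by
  refine ⟨⟨Adjunction.mkOfHomEquiv
    { homEquiv := fun a X =>
        { toFun := fun φ => φ.left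
          invFun := fun g =>
            ⟨g, (adj.homEquiv a X.right).symm (g ≫ X.hom), by
              simp only [Adjunction.homEquiv_counit, glueIShriek, Functor.id_obj,
                Functor.id_map, Functor.map_comp, Category.assoc]
              rw [adj.unit_naturality_assoc,
                adj.unit_naturality_assoc]
              simp⟩
          left_inv := fun φ => by
            ext
            · rfl
            · apply (adj.homEquiv a X.right).injective
              have w := φ.w
              simp only [Functor.id_obj, Functor.id_map] at w
              rw [Equiv.apply_symm_apply]
              simp only [Adjunction.homEquiv_unit]
              exact w
          right_inv := fun g => rfl }
      homEquiv_naturality_left_symm := fun f g => by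
        ext
        · rfl
        · simp [Adjunction.homEquiv_counit, glueIShriek]
          change L.map (f ≫ g) ≫ _ = L.map f ≫ (L.map g ≫ _)
          simp
      homEquiv_naturality_right := fun f g => rfl }⟩, ?_, ?_⟩
  · constructor
    intro a a' φ
    refine ⟨φ.left, ?_⟩
    ext
    · rfl
    · apply (adj.homEquiv a (L.obj a')).injective
      have w := φ.w
      simp only [glueIShriek, Functor.id_obj, Functor.id_map] at w
      simp [Adjunction.homEquiv_unit, glueIShriek, ← w]
  · exact ⟨fun h => congrArg CommaMorphism.left h⟩
end

section
/- Let F : B ⥤ A be a functor between categories such that B has a terminal object ⊤ and F(⊤) is a terminal object of A, and let Gl(F) be the Artin gluing of F, with projection functor i* : Gl(F) ⥤ A sending (a, b, f) to a. Then i* has a fully faithful right adjoint i_* given on objects by a ↦ (a, ⊤, ! : a ⟶ F(⊤)), where ! is the unique morphism to the terminal object F(⊤). -/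
open CategoryTheory CategoryTheory.Limits

variable {A : Type*} [Category A] {B : Type*} [Category B]

/-- Given a functor `F : B ⥤ A` such that `F ⊤` is terminal in `A`, the functor
`i_* : A ⥤ Gl(F)` into the Artin gluing `Gl(F) = Comma (𝟭 A) F`, given on objects by
`a ↦ (a, ⊤, ! : a ⟶ F ⊤)`, where `!` is the unique morphism to the terminal object
`F ⊤`. -/
noncomputable def glueIStar (F : B ⥤ A) [HasTerminal B]
    (hT : IsTerminal (F.obj (⊤_ B))) : A ⥤ Comma (𝟭 A) F where
  obj a := ⟨a, ⊤_ B, hT.from a⟩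
  map {a a'} g := ⟨g, 𝟙 (⊤_ B), by apply hT.hom_ext⟩

/-- Let `F : B ⥤ A` be a functor such that `B` has a terminal object
`⊤` and `F ⊤` is a terminal object of `A`, and let `Gl(F) = Comma (𝟭 A) F` be the
Artin gluing of `F`, with projection `i* : Gl(F) ⥤ A` sending `(a, b, f)` to `a`.
Then `i*` has a fully faithful right adjoint `i_*` given on objects by
`a ↦ (a, ⊤, !)`. -/
theorem glue_closed_immersion_star (F : B ⥤ A) [HasTerminal B]
    (hT : IsTerminal (F.obj (⊤_ B))) :
    Nonempty (Comma.fst (𝟭 A) F ⊣ glueIStar F hT) ∧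
      (glueIStar F hT).Full ∧ (glueIStar F hT).Faithful := by
  refine ⟨⟨Adjunction.mkOfHomEquiv
    { homEquiv := fun X a =>
        { toFun := fun g => ⟨g, terminal.from X.right, by apply hT.hom_ext⟩
          invFun := fun φ => φ.left
          left_inv := fun g => rfl
          right_inv := fun φ => by
            ext
            · rfl
            · exact terminal.hom_ext _ _ }
      homEquiv_naturality_left_symm := fun f g => rfl
      homEquiv_naturality_right := fun f g => by
        ext
        · rfl
        · exact terminal.hom_ext _ _ }⟩,
    ⟨fun {a a'} φ => ⟨φ.left, by
      ext
      · rfl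
      · exact terminal.hom_ext _ _⟩⟩,
    ⟨fun {a a'} g g' h => congrArg CommaMorphism.left h⟩⟩
end
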